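/- arXiv:0805.3809 — 4 statements merged into one kernel-verified Lean document; each statement's English description precedes it below -/
import Mathlib

section
/- Let E ⊆ ℝⁿ and F ⊆ ℝᵐ be closed sets, and let P : ℝⁿ → ℝᵐ and Q : ℝᵐ → ℝⁿ be maps whose components are real polynomials, such that P(E) = F and Q(P(x)) = x for every x ∈ E. Then there exists a continuous linear operator T : S(ℝᵐ) → S(ℝⁿ) such that (Tf)(x) = f(P(x)) for every f ∈ S(ℝᵐ) and every x ∈ E; equivalently, for every p ∈ ℕ there exist q ∈ ℕ and C > 0 with ‖Tf‖_{(p,ℝⁿ)} ≤ C ‖f‖_{(q,ℝᵐ)} for all f ∈ S(ℝᵐ). -/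
/-- The `p`-th Schwartz seminorm `‖f‖_{(p)} = sup_{x, |α| ≤ p} (1+|x|)^p |∂^α f(x)|`
(with derivatives of order `j ≤ p` measured by the iterated Fréchet derivative). -/
noncomputable def snorm' {W : Type*} [NormedAddCommGroup W] [NormedSpace ℝ W]
    (p : ℕ) (f : W → ℂ) : ℝ :=
  ⨆ q : Fin (p + 1) × W, (1 + ‖q.2‖) ^ p * ‖iteratedFDeriv ℝ (q.1 : ℕ) f q.2‖

/-- A map `ℝⁿ → ℝᵐ` all of whose components are real polynomials. -/
def IsPolyMap {n m : ℕ} (P : EuclideanSpace ℝ (Fin n) → EuclideanSpace ℝ (Fin m)) : Prop :=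
  ∃ p : Fin m → MvPolynomial (Fin n) ℝ,
    ∀ (x : EuclideanSpace ℝ (Fin n)) (i : Fin m), P x i = MvPolynomial.eval (fun j => x j) (p i)

/-!
Put `D x = ‖x - Q (P x)‖ ^ 2`, which vanishes on `E`. The map `g = (P, D) : ℝⁿ → ℝᵐ × ℝ` has
temperate growth, and `x` is recovered from `g x` up to polynomial loss:
`‖x‖ ≤ ‖x - Q (P x)‖ + ‖Q (P x)‖` is bounded by a polynomial in `‖g x‖`. Hence `F ↦ F ∘ g` is
continuous from `𝓢(ℝᵐ × ℝ)` to `𝓢(ℝⁿ)`, and for a fixed `ρ ∈ 𝓢(ℝ)` with `ρ 0 = 1` the operator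
`(T f)(x) = ρ (D x) • f (P x)`, i.e. `(ρ ⊗ f) ∘ g`, agrees with `f ∘ P` on `E`. The seminorm
estimate is the continuity of `T`, since the seminorms `snorm' p` and Mathlib's Schwartz seminorms
dominate each other.
-/

open Function SchwartzMap
open scoped ContDiff

theorem MvPolynomial.hasTemperateGrowth_eval {σ E : Type*} [NormedAddCommGroup E]
    [NormedSpace ℝ E] {v : σ → E → ℝ} (hv : ∀ i, (v i).HasTemperateGrowth)
    (p : MvPolynomial σ ℝ) : HasTemperateGrowth fun x => eval (fun i => v i x) p := by
  induction p using MvPolynomial.induction_on with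
  | C a => simp
  | add p q hp hq => simpa using hp.fun_add hq
  | mul_X p i hp => simpa using hp.fun_mul (hv i)

theorem EuclideanSpace.hasTemperateGrowth_of_forall_apply {ι E : Type*} [Fintype ι]
    [NormedAddCommGroup E] [NormedSpace ℝ E] {f : E → EuclideanSpace ℝ ι}
    (hf : ∀ i, HasTemperateGrowth fun x => f x i) : f.HasTemperateGrowth := by
  classical
  have hsum : f = fun x => ∑ i, f x i • EuclideanSpace.single i (1 : ℝ) := by
    funext x
    simpa [EuclideanSpace.basisFun_apply] using ((EuclideanSpace.basisFun ι ℝ).sum_repr (f x)).symm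
  rw [hsum]
  exact HasTemperateGrowth.sum fun i _ => (hf i).smul (.const _)

theorem IsPolyMap.hasTemperateGrowth {n m : ℕ}
    {P : EuclideanSpace ℝ (Fin n) → EuclideanSpace ℝ (Fin m)} (hP : IsPolyMap P) :
    P.HasTemperateGrowth := by
  obtain ⟨p, hp⟩ := hP
  refine EuclideanSpace.hasTemperateGrowth_of_forall_apply fun i => ?_
  simp_rw [hp]
  exact MvPolynomial.hasTemperateGrowth_eval
    (fun j => (EuclideanSpace.proj j : EuclideanSpace ℝ (Fin n) →L[ℝ] ℝ).hasTemperateGrowth) (p i)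

theorem ContinuousLinearMap.norm_iteratedFDeriv_comp_right_le {𝕜 E F G : Type*}
    [NontriviallyNormedField 𝕜] [NormedAddCommGroup E] [NormedSpace 𝕜 E]
    [NormedAddCommGroup F] [NormedSpace 𝕜 F] [NormedAddCommGroup G] [NormedSpace 𝕜 G]
    {n : WithTop ℕ∞} (g : G →L[𝕜] E) {f : E → F} (hf : ContDiff 𝕜 n f) (x : G) {i : ℕ}
    (hi : i ≤ n) : ‖iteratedFDeriv 𝕜 i (f ∘ g) x‖ ≤ ‖iteratedFDeriv 𝕜 i f (g x)‖ * ‖g‖ ^ i := by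
  rw [g.iteratedFDeriv_comp_right hf x hi]
  simpa using (iteratedFDeriv 𝕜 i f (g x)).norm_compContinuousLinearMap_le fun _ => g

theorem Prod.norm_le_one_add_norm_fst_mul_one_add_norm_snd {E H : Type*}
    [SeminormedAddCommGroup E] [SeminormedAddCommGroup H] (z : E × H) :
    ‖z‖ ≤ (1 + ‖z.1‖) * (1 + ‖z.2‖) := by
  have : ‖z‖ ≤ ‖z.1‖ + ‖z.2‖ :=
    max_le (le_add_of_nonneg_right (norm_nonneg _)) (le_add_of_nonneg_left (norm_nonneg _))
  nlinarith [norm_nonneg z.1, norm_nonneg z.2]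

section Tensor

variable {E H F : Type*} [NormedAddCommGroup E] [NormedSpace ℝ E]
  [NormedAddCommGroup H] [NormedSpace ℝ H] [NormedAddCommGroup F] [NormedSpace ℝ F]

theorem norm_iteratedFDeriv_comp_fst_le {f : E → F} (hf : ContDiff ℝ ∞ f) (z : E × H) (i : ℕ) :
    ‖iteratedFDeriv ℝ i (fun z : E × H => f z.1) z‖ ≤ ‖iteratedFDeriv ℝ i f z.1‖ :=
  ((ContinuousLinearMap.fst ℝ E H).norm_iteratedFDeriv_comp_right_le hf z
    (mod_cast le_top)).trans <| mul_le_of_le_one_right (norm_nonneg _) <|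
      pow_le_one₀ (norm_nonneg _) (ContinuousLinearMap.norm_fst_le ℝ E H)

theorem norm_iteratedFDeriv_comp_snd_le {f : H → F} (hf : ContDiff ℝ ∞ f) (z : E × H) (i : ℕ) :
    ‖iteratedFDeriv ℝ i (fun z : E × H => f z.2) z‖ ≤ ‖iteratedFDeriv ℝ i f z.2‖ :=
  ((ContinuousLinearMap.snd ℝ E H).norm_iteratedFDeriv_comp_right_le hf z
    (mod_cast le_top)).trans <| mul_le_of_le_one_right (norm_nonneg _) <|
      pow_le_one₀ (norm_nonneg _) (ContinuousLinearMap.norm_snd_le ℝ E H)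

variable {𝕜 : Type*} [NormedField 𝕜] [NormedSpace 𝕜 F] [SMulCommClass ℝ 𝕜 F]

theorem SchwartzMap.norm_pow_mul_iteratedFDeriv_tensor_le (φ : 𝓢(H, ℝ)) (f : 𝓢(E, F))
    (k n : ℕ) (z : E × H) :
    ‖z‖ ^ k * ‖iteratedFDeriv ℝ n (fun z : E × H => φ z.2 • f z.1) z‖ ≤
      2 ^ n * (2 ^ k * (Finset.Iic (k, n)).sup (schwartzSeminormFamily ℝ H ℝ) φ) *
        (2 ^ k * (Finset.Iic (k, n)).sup (schwartzSeminormFamily 𝕜 E F) f) := by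
  set Sφ := 2 ^ k * (Finset.Iic (k, n)).sup (schwartzSeminormFamily ℝ H ℝ) φ
  set Sf := 2 ^ k * (Finset.Iic (k, n)).sup (schwartzSeminormFamily 𝕜 E F) f
  have hφ : ∀ i ≤ n,
      (1 + ‖z.2‖) ^ k * ‖iteratedFDeriv ℝ i (fun z : E × H => φ z.2) z‖ ≤ Sφ := fun i hi =>
    (mul_le_mul_of_nonneg_left (norm_iteratedFDeriv_comp_snd_le (φ.smooth ⊤) z i)
      (by positivity)).trans (one_add_le_sup_seminorm_apply (m := (k, n)) le_rfl hi φ z.2)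
  have hf : ∀ i ≤ n,
      (1 + ‖z.1‖) ^ k * ‖iteratedFDeriv ℝ i (fun z : E × H => f z.1) z‖ ≤ Sf := fun i hi =>
    (mul_le_mul_of_nonneg_left (norm_iteratedFDeriv_comp_fst_le (f.smooth ⊤) z i)
      (by positivity)).trans (one_add_le_sup_seminorm_apply (m := (k, n)) le_rfl hi f z.1)
  have hleibniz := norm_iteratedFDeriv_smul_le ((φ.smooth ⊤).comp contDiff_snd)
    ((f.smooth ⊤).comp contDiff_fst) z (n := n) (mod_cast le_top)
  have hz : ‖z‖ ^ k ≤ (1 + ‖z.2‖) ^ k * (1 + ‖z.1‖) ^ k := by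
    rw [← mul_pow, mul_comm]
    exact pow_le_pow_left₀ (norm_nonneg _) (Prod.norm_le_one_add_norm_fst_mul_one_add_norm_snd z) k
  calc ‖z‖ ^ k * ‖iteratedFDeriv ℝ n (fun z : E × H => φ z.2 • f z.1) z‖
      ≤ (1 + ‖z.2‖) ^ k * (1 + ‖z.1‖) ^ k * ∑ i ∈ Finset.range (n + 1), (n.choose i : ℝ) *
          ‖iteratedFDeriv ℝ i (fun z : E × H => φ z.2) z‖ *
          ‖iteratedFDeriv ℝ (n - i) (fun z : E × H => f z.1) z‖ :=
        mul_le_mul hz hleibniz (norm_nonneg _) (by positivity)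
    _ = ∑ i ∈ Finset.range (n + 1), (n.choose i : ℝ) *
          ((1 + ‖z.2‖) ^ k * ‖iteratedFDeriv ℝ i (fun z : E × H => φ z.2) z‖) *
          ((1 + ‖z.1‖) ^ k * ‖iteratedFDeriv ℝ (n - i) (fun z : E × H => f z.1) z‖) := by
        rw [Finset.mul_sum]
        exact Finset.sum_congr rfl fun i _ => by ring
    _ ≤ ∑ i ∈ Finset.range (n + 1), (n.choose i : ℝ) * Sφ * Sf := by
        gcongr with i hi
        · exact hφ i (Finset.mem_range_succ_iff.mp hi)
        · exact hf (n - i) (Nat.sub_le n i)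
    _ = 2 ^ n * Sφ * Sf := by
        rw [← Finset.sum_mul, ← Finset.sum_mul]
        exact_mod_cast congrArg (fun N : ℕ => (N : ℝ) * Sφ * Sf) (Nat.sum_range_choose n)

variable (𝕜) in
noncomputable def SchwartzMap.tensorCLM (φ : 𝓢(H, ℝ)) : 𝓢(E, F) →L[𝕜] 𝓢(E × H, F) :=
  mkCLM (fun f z => φ z.2 • f z.1) (fun f g z => by simp [smul_add])
    (fun a f z => smul_comm (φ z.2) a (f z.1))
    (fun f => ((φ.smooth ⊤).comp contDiff_snd).smul ((f.smooth ⊤).comp contDiff_fst))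
    fun ⟨k, n⟩ => ⟨Finset.Iic (k, n),
      2 ^ n * (2 ^ k * (Finset.Iic (k, n)).sup (schwartzSeminormFamily ℝ H ℝ) φ) * 2 ^ k,
      by positivity, fun f z => by
        simpa only [mul_assoc] using φ.norm_pow_mul_iteratedFDeriv_tensor_le f k n z⟩

@[simp]
theorem SchwartzMap.tensorCLM_apply (φ : 𝓢(H, ℝ)) (f : 𝓢(E, F)) (z : E × H) :
    tensorCLM 𝕜 φ f z = φ z.2 • f z.1 := rfl

end Tensor

section SchwartzSeminorms

variable {V : Type*} [NormedAddCommGroup V] [NormedSpace ℝ V]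

theorem snorm'_nonneg (p : ℕ) (f : V → ℂ) : 0 ≤ snorm' p f :=
  Real.iSup_nonneg fun _ => by positivity

theorem SchwartzMap.snorm'_le (p : ℕ) (f : 𝓢(V, ℂ)) :
    snorm' p f ≤ 2 ^ p * (Finset.Iic (p, p)).sup (schwartzSeminormFamily ℂ V ℂ) f :=
  Real.iSup_le (fun q => one_add_le_sup_seminorm_apply (m := (p, p)) le_rfl
    (Nat.lt_succ_iff.mp q.1.isLt) f q.2) (by positivity)

theorem SchwartzMap.one_add_norm_pow_mul_le_snorm' {n q : ℕ} (hn : n ≤ q) (f : 𝓢(V, ℂ))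
    (x : V) : (1 + ‖x‖) ^ q * ‖iteratedFDeriv ℝ n f x‖ ≤ snorm' q f := by
  have hbdd : BddAbove (Set.range fun w : Fin (q + 1) × V =>
      (1 + ‖w.2‖) ^ q * ‖iteratedFDeriv ℝ (w.1 : ℕ) f w.2‖) :=
    ⟨_, Set.forall_mem_range.mpr fun w => one_add_le_sup_seminorm_apply (𝕜 := ℂ) (m := (q, q))
      le_rfl (Nat.lt_succ_iff.mp w.1.isLt) f w.2⟩
  exact le_ciSup hbdd (⟨⟨n, Nat.lt_succ_of_le hn⟩, x⟩ : Fin (q + 1) × V)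

theorem SchwartzMap.seminorm_le_snorm' {k n q : ℕ} (hk : k ≤ q) (hn : n ≤ q) (f : 𝓢(V, ℂ)) :
    SchwartzMap.seminorm ℂ k n f ≤ snorm' q f := by
  refine seminorm_le_bound ℂ k n f (snorm'_nonneg q f) fun x => ?_
  have hx : 1 ≤ 1 + ‖x‖ := le_add_of_nonneg_right (norm_nonneg x)
  calc ‖x‖ ^ k * ‖iteratedFDeriv ℝ n f x‖
      ≤ (1 + ‖x‖) ^ q * ‖iteratedFDeriv ℝ n f x‖ := by
        gcongr ?_ * _
        exact (pow_le_pow_left₀ (norm_nonneg x) (le_add_of_nonneg_left zero_le_one) k).trans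
          (pow_le_pow_right₀ hx hk)
    _ ≤ snorm' q f := f.one_add_norm_pow_mul_le_snorm' hn x

theorem SchwartzMap.finset_sup_seminorm_le_snorm' (s : Finset (ℕ × ℕ)) (f : 𝓢(V, ℂ)) :
    s.sup (schwartzSeminormFamily ℂ V ℂ) f ≤ snorm' (s.sup fun i => max i.1 i.2) f :=
  Seminorm.finset_sup_apply_le (snorm'_nonneg _ _) fun i hi =>
    have hi' : max i.1 i.2 ≤ s.sup fun i => max i.1 i.2 :=
      Finset.le_sup (f := fun i => max i.1 i.2) hi
    f.seminorm_le_snorm' ((le_max_left _ _).trans hi') ((le_max_right _ _).trans hi')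

theorem ContinuousLinearMap.exists_snorm'_le {W : Type*} [NormedAddCommGroup W]
    [NormedSpace ℝ W] (T : 𝓢(V, ℂ) →L[ℂ] 𝓢(W, ℂ)) (p : ℕ) :
    ∃ (q : ℕ) (C : ℝ), 0 < C ∧ ∀ f, snorm' p (T f) ≤ C * snorm' q f := by
  have hcont : Continuous
      (((Finset.Iic (p, p)).sup (schwartzSeminormFamily ℂ W ℂ)).comp T.toLinearMap) :=
    (Seminorm.continuous_finsetSup fun i _ =>
      (schwartz_withSeminorms ℂ W ℂ).continuous_seminorm i).comp T.continuous
  obtain ⟨s, C, hC, hbound⟩ :=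
    Seminorm.bound_of_continuous (schwartz_withSeminorms ℂ V ℂ) _ hcont
  refine ⟨s.sup fun i => max i.1 i.2, 2 ^ p * C, by positivity, fun f => ?_⟩
  calc snorm' p (T f)
      ≤ 2 ^ p * (Finset.Iic (p, p)).sup (schwartzSeminormFamily ℂ W ℂ) (T f) := (T f).snorm'_le p
    _ ≤ 2 ^ p * (C * s.sup (schwartzSeminormFamily ℂ V ℂ) f) := by
        gcongr
        exact hbound f
    _ ≤ 2 ^ p * (C * snorm' (s.sup fun i => max i.1 i.2) f) := by
        gcongr
        exact f.finset_sup_seminorm_le_snorm' s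
    _ = 2 ^ p * C * snorm' (s.sup fun i => max i.1 i.2) f := by ring

end SchwartzSeminorms

theorem SchwartzMap.exists_apply_zero_eq_one (H : Type*) [NormedAddCommGroup H]
    [NormedSpace ℝ H] [FiniteDimensional ℝ H] : ∃ ρ : 𝓢(H, ℝ), ρ 0 = 1 := by
  let b : ContDiffBump (0 : H) := ⟨1, 2, one_pos, one_lt_two⟩
  exact ⟨b.hasCompactSupport.toSchwartzMap b.contDiff,
    b.one_of_mem_closedBall (Metric.mem_closedBall_self zero_le_one)⟩

theorem Function.HasTemperateGrowth.prodMk {E F G : Type*} [NormedAddCommGroup E]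
    [NormedSpace ℝ E] [NormedAddCommGroup F] [NormedSpace ℝ F] [NormedAddCommGroup G]
    [NormedSpace ℝ G] {f : E → F} {g : E → G} (hf : f.HasTemperateGrowth)
    (hg : g.HasTemperateGrowth) : HasTemperateGrowth fun x => (f x, g x) := by
  have hsum : (fun x => (f x, g x)) =
      fun x => ContinuousLinearMap.inl ℝ F G (f x) + ContinuousLinearMap.inr ℝ F G (g x) := by
    funext x; simp
  rw [hsum]
  exact ((ContinuousLinearMap.inl ℝ F G).hasTemperateGrowth.comp hf).fun_add
    ((ContinuousLinearMap.inr ℝ F G).hasTemperateGrowth.comp hg)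

section DefectLift

variable {E F : Type*} [NormedAddCommGroup E]

-- The squared norm keeps the second coordinate smooth.
def defectLift (P : E → F) (Q : F → E) (x : E) : F × ℝ := (P x, ‖x - Q (P x)‖ ^ 2)

theorem defectLift_of_eq {P : E → F} {Q : F → E} {x : E} (h : Q (P x) = x) :
    defectLift P Q x = (P x, 0) := by
  simp [defectLift, h]

variable [NormedAddCommGroup F] [NormedSpace ℝ F]

theorem Function.HasTemperateGrowth.defectLift {E : Type*} [NormedAddCommGroup E]
    [InnerProductSpace ℝ E] {P : E → F} {Q : F → E} (hP : P.HasTemperateGrowth)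
    (hQ : Q.HasTemperateGrowth) : (defectLift P Q).HasTemperateGrowth :=
  hP.prodMk ((hasTemperateGrowth_norm_sq E).comp (HasTemperateGrowth.id'.fun_sub (hQ.comp hP)))

theorem exists_norm_le_mul_one_add_norm_defectLift_pow [NormedSpace ℝ E] (P : E → F) {Q : F → E}
    (hQ : Q.HasTemperateGrowth) :
    ∃ (k : ℕ) (C : ℝ), ∀ x, ‖x‖ ≤ C * (1 + ‖defectLift P Q x‖) ^ k := by
  obtain ⟨k, C, hC, hQ⟩ := hQ.norm_iteratedFDeriv_le_uniform 0
  refine ⟨k + 1, 1 + C, fun x => ?_⟩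
  set N := 1 + ‖defectLift P Q x‖
  have hN : 1 ≤ N := le_add_of_nonneg_right (norm_nonneg _)
  have hdefect : ‖x - Q (P x)‖ ≤ N := by
    have : ‖x - Q (P x)‖ ^ 2 ≤ ‖defectLift P Q x‖ :=
      (le_abs_self _).trans (norm_snd_le (defectLift P Q x))
    nlinarith [norm_nonneg (x - Q (P x))]
  have hQP : ‖Q (P x)‖ ≤ C * N ^ k := by
    have hQ0 : ‖Q (P x)‖ ≤ C * (1 + ‖P x‖) ^ k := by simpa using hQ 0 le_rfl (P x)
    refine hQ0.trans ?_
    gcongr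
    exact add_le_add le_rfl (norm_fst_le (defectLift P Q x))
  calc ‖x‖ ≤ ‖x - Q (P x)‖ + ‖Q (P x)‖ := norm_le_norm_sub_add x (Q (P x))
    _ ≤ N ^ (k + 1) + C * N ^ (k + 1) := by
        gcongr
        · exact hdefect.trans (le_self_pow₀ hN k.succ_ne_zero)
        · exact hQP.trans (by gcongr; exact k.le_succ)
    _ = (1 + C) * N ^ (k + 1) := by ring

end DefectLift

theorem SchwartzMap.exists_clm_apply_eq_comp_of_leftInvOn (𝕜 : Type*) {E F V : Type*} [RCLike 𝕜]
    [NormedAddCommGroup E] [InnerProductSpace ℝ E] [NormedAddCommGroup F] [NormedSpace ℝ F]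
    [NormedAddCommGroup V] [NormedSpace ℝ V] [NormedSpace 𝕜 V] [SMulCommClass ℝ 𝕜 V]
    {P : E → F} {Q : F → E} {s : Set E} (hP : P.HasTemperateGrowth) (hQ : Q.HasTemperateGrowth)
    (hQP : Set.LeftInvOn Q P s) :
    ∃ T : 𝓢(F, V) →L[𝕜] 𝓢(E, V), ∀ f x, x ∈ s → T f x = f (P x) := by
  obtain ⟨ρ, hρ⟩ := exists_apply_zero_eq_one ℝ
  refine ⟨(compCLM 𝕜 (hP.defectLift hQ)
    (exists_norm_le_mul_one_add_norm_defectLift_pow P hQ)).comp (tensorCLM 𝕜 ρ), fun f x hx => ?_⟩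
  simp [defectLift_of_eq (hQP hx), hρ]

theorem stmt0_general {n m : ℕ} (E : Set (EuclideanSpace ℝ (Fin n)))
    (P : EuclideanSpace ℝ (Fin n) → EuclideanSpace ℝ (Fin m))
    (Q : EuclideanSpace ℝ (Fin m) → EuclideanSpace ℝ (Fin n))
    (hP : IsPolyMap P) (hQ : IsPolyMap Q)
    (hQP : ∀ x ∈ E, Q (P x) = x) :
    ∃ T : SchwartzMap (EuclideanSpace ℝ (Fin m)) ℂ →L[ℂ]
        SchwartzMap (EuclideanSpace ℝ (Fin n)) ℂ,
      (∀ (f : SchwartzMap (EuclideanSpace ℝ (Fin m)) ℂ) (x : EuclideanSpace ℝ (Fin n)),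
        x ∈ E → T f x = f (P x)) ∧
      ∀ p : ℕ, ∃ (q : ℕ) (C : ℝ), 0 < C ∧
        ∀ f : SchwartzMap (EuclideanSpace ℝ (Fin m)) ℂ,
          snorm' p (⇑(T f)) ≤ C * snorm' q ⇑f := by
  obtain ⟨T, hT⟩ := SchwartzMap.exists_clm_apply_eq_comp_of_leftInvOn ℂ (V := ℂ)
    hP.hasTemperateGrowth hQ.hasTemperateGrowth hQP
  exact ⟨T, hT, T.exists_snorm'_le⟩

/-- Let `E ⊆ ℝⁿ`, `F ⊆ ℝᵐ` be closed, `P, Q` polynomial maps with `P(E) = F` and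
`Q ∘ P = id` on `E`. Then there is a continuous linear operator `T : 𝓢(ℝᵐ) → 𝓢(ℝⁿ)` with
`Tf = f ∘ P` on `E`; moreover, for every `p` there are `q` and `C > 0` with
`‖Tf‖_{(p,ℝⁿ)} ≤ C ‖f‖_{(q,ℝᵐ)}` for all `f`. -/
theorem stmt0 {n m : ℕ} (E : Set (EuclideanSpace ℝ (Fin n))) (F : Set (EuclideanSpace ℝ (Fin m)))
    (hE : IsClosed E) (hF : IsClosed F)
    (P : EuclideanSpace ℝ (Fin n) → EuclideanSpace ℝ (Fin m))
    (Q : EuclideanSpace ℝ (Fin m) → EuclideanSpace ℝ (Fin n))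
    (hP : IsPolyMap P) (hQ : IsPolyMap Q)
    (hPE : P '' E = F) (hQP : ∀ x ∈ E, Q (P x) = x) :
    ∃ T : SchwartzMap (EuclideanSpace ℝ (Fin m)) ℂ →L[ℂ]
        SchwartzMap (EuclideanSpace ℝ (Fin n)) ℂ,
      (∀ (f : SchwartzMap (EuclideanSpace ℝ (Fin m)) ℂ) (x : EuclideanSpace ℝ (Fin n)),
        x ∈ E → T f x = f (P x)) ∧
      ∀ p : ℕ, ∃ (q : ℕ) (C : ℝ), 0 < C ∧
        ∀ f : SchwartzMap (EuclideanSpace ℝ (Fin m)) ℂ,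
          snorm' p (⇑(T f)) ≤ C * snorm' q ⇑f :=
  stmt0_general E P Q hP hQ hQP
end

section
/- Assume in addition that each ρ_j is homogeneous of degree α_j ≥ 1 (ρ_j(rx) = r^{α_j} ρ_j(x) for r > 0). Then ρ(x) = 0 if and only if x = 0, and there exist constants 0 < c ≤ C such that c |x| ≤ Σ_{j=1}^{d} |ρ_j(x)|^{1/α_j} ≤ C |x| for every x ∈ ℝᵐ. -/
/-!
The squared norm `∑ i, X i ^ 2` is invariant under `K ⊆ O(m)`, hence a polynomial in the `ρ_j`;
so `ρ x` determines `‖x‖`. Each `ρ_j` is homogeneous of positive degree and thus vanishes at `0`,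
whence `ρ x = 0` forces `x = 0`. The gauge `∑ j, |ρ_j|^(1/α_j)` is continuous, positively
homogeneous of degree one and positive off `0`, so its extrema on the unit sphere give `c` and `C`.
-/

/-- The action of an `m × m` real matrix on `ℝᵐ` (as Euclidean space). -/
noncomputable def mact {m : ℕ} (A : Matrix (Fin m) (Fin m) ℝ)
    (x : EuclideanSpace ℝ (Fin m)) : EuclideanSpace ℝ (Fin m) :=
  (WithLp.equiv 2 (Fin m → ℝ)).symm (A.mulVec ((WithLp.equiv 2 (Fin m → ℝ)) x))

/-- The Hilbert map `ρ = (ρ₁,…,ρ_d) : ℝᵐ → ℝᵈ` associated to polynomials `ρ₁,…,ρ_d`. -/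
noncomputable def evalMap {m d : ℕ} (ρp : Fin d → MvPolynomial (Fin m) ℝ)
    (x : EuclideanSpace ℝ (Fin m)) : EuclideanSpace ℝ (Fin d) :=
  (WithLp.equiv 2 (Fin d → ℝ)).symm (fun j => MvPolynomial.eval (fun i => x i) (ρp j))

open Matrix MvPolynomial

theorem eval_eq_of_mem_adjoin_range {σ ι R : Type*} [CommRing R] {ρ : ι → MvPolynomial σ R}
    {P : MvPolynomial σ R} (hP : P ∈ Algebra.adjoin R (Set.range ρ)) {x y : σ → R}
    (h : ∀ j, eval x (ρ j) = eval y (ρ j)) : eval x P = eval y P := by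
  have hρ : Set.EqOn (aeval x) (aeval y) (Set.range ρ) := by
    rintro _ ⟨j, rfl⟩
    exact h j
  exact AlgHom.eqOn_adjoin_iff.2 hρ hP

theorem apply_zero_of_pow_homogeneous {E : Type*} [AddCommGroup E] [Module ℝ E] {g : E → ℝ}
    {n : ℕ} (hn : n ≠ 0) (hg : ∀ r : ℝ, 0 < r → ∀ x, g (r • x) = r ^ n * g x) : g 0 = 0 := by
  have h := hg 2 two_pos 0
  rw [smul_zero] at h
  have : (1 : ℝ) < 2 ^ n := one_lt_pow₀ one_lt_two hn
  nlinarith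

theorem abs_rpow_one_div_of_pow_homogeneous {E : Type*} [AddCommGroup E] [Module ℝ E]
    {g : E → ℝ} {n : ℕ} (hn : n ≠ 0) (hg : ∀ r : ℝ, 0 < r → ∀ x, g (r • x) = r ^ n * g x)
    {r : ℝ} (hr : 0 < r) (x : E) : |g (r • x)| ^ (1 / (n : ℝ)) = r * |g x| ^ (1 / (n : ℝ)) := by
  rw [hg r hr x, abs_mul, abs_of_pos (pow_pos hr n),
    Real.mul_rpow (pow_nonneg hr.le n) (abs_nonneg _), ← Real.rpow_natCast,
    ← Real.rpow_mul hr.le, mul_one_div_cancel (by exact_mod_cast hn), Real.rpow_one]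

theorem exists_mul_norm_le_le_mul_norm_of_homogeneous {E : Type*} [NormedAddCommGroup E]
    [NormedSpace ℝ E] [ProperSpace E] {f : E → ℝ} (hf : Continuous f)
    (hpos : ∀ x ≠ 0, 0 < f x) (hhom : ∀ r : ℝ, 0 < r → ∀ x, f (r • x) = r * f x) :
    ∃ c C : ℝ, 0 < c ∧ c ≤ C ∧ ∀ x, c * ‖x‖ ≤ f x ∧ f x ≤ C * ‖x‖ := by
  have hf0 : f 0 = 0 := apply_zero_of_pow_homogeneous one_ne_zero (by simpa using hhom)
  rcases subsingleton_or_nontrivial E with hE | hE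
  · refine ⟨1, 1, one_pos, le_rfl, fun x => ?_⟩
    simp [Subsingleton.elim x 0, hf0]
  have hS : IsCompact (Metric.sphere (0 : E) 1) := isCompact_sphere 0 1
  have hSne : (Metric.sphere (0 : E) 1).Nonempty := NormedSpace.sphere_nonempty.2 zero_le_one
  obtain ⟨a, haS, hmin⟩ := hS.exists_isMinOn hSne hf.continuousOn
  obtain ⟨b, -, hmax⟩ := hS.exists_isMaxOn hSne hf.continuousOn
  have hpos_a : 0 < f a := hpos a (ne_zero_of_mem_unit_sphere ⟨a, haS⟩)
  refine ⟨f a, f b, hpos_a, hmax haS, fun x => ?_⟩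
  rcases eq_or_ne x 0 with rfl | hx
  · simp [hf0]
  have hnx : 0 < ‖x‖ := norm_pos_iff.2 hx
  set y := ‖x‖⁻¹ • x
  have hyS : y ∈ Metric.sphere (0 : E) 1 := by
    simp [y, norm_smul, inv_mul_cancel₀ hnx.ne']
  have hfx : f x = ‖x‖ * f y := by
    rw [← hhom _ hnx, smul_inv_smul₀ hnx.ne']
  rw [hfx, mul_comm _ ‖x‖, mul_comm _ ‖x‖]
  exact ⟨mul_le_mul_of_nonneg_left (hmin hyS) hnx.le, mul_le_mul_of_nonneg_left (hmax hyS) hnx.le⟩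

theorem eval_sum_X_sq {m : ℕ} (x : EuclideanSpace ℝ (Fin m)) :
    eval (fun i => x i) (∑ i, X i ^ 2 : MvPolynomial (Fin m) ℝ) = ‖x‖ ^ 2 := by
  simp [EuclideanSpace.norm_sq_eq]

theorem norm_mact_of_mem_orthogonalGroup {m : ℕ} {A : Matrix (Fin m) (Fin m) ℝ}
    (hA : A ∈ orthogonalGroup (Fin m) ℝ) (x : EuclideanSpace ℝ (Fin m)) :
    ‖mact A x‖ = ‖x‖ := by
  have hAA : Aᵀ * A = 1 := by
    simpa [star_eq_conjTranspose] using mem_unitaryGroup_iff'.1 hA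
  have hsq : ‖mact A x‖ ^ 2 = ‖x‖ ^ 2 := by
    simp only [EuclideanSpace.norm_sq_eq, Real.norm_eq_abs, sq_abs]
    simp only [sq]
    change (A *ᵥ x.ofLp) ⬝ᵥ (A *ᵥ x.ofLp) = x.ofLp ⬝ᵥ x.ofLp
    rw [dotProduct_mulVec, ← mulVec_transpose, mulVec_mulVec, hAA, one_mulVec]
  exact (pow_left_inj₀ (norm_nonneg _) (norm_nonneg _) two_ne_zero).1 hsq

theorem evalMap_eq_zero_iff {m d : ℕ} (ρp : Fin d → MvPolynomial (Fin m) ℝ)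
    (x : EuclideanSpace ℝ (Fin m)) : evalMap ρp x = 0 ↔ ∀ j, eval (fun i => x i) (ρp j) = 0 := by
  simp [evalMap, funext_iff]

theorem norm_eq_of_eval_hilbertBasis_eq {m d : ℕ} {K : Subgroup (Matrix.orthogonalGroup (Fin m) ℝ)}
    {ρp : Fin d → MvPolynomial (Fin m) ℝ}
    (hρgen : ∀ P : MvPolynomial (Fin m) ℝ,
      (∀ k ∈ K, ∀ x : EuclideanSpace ℝ (Fin m),
        eval (fun i => mact (k : Matrix (Fin m) (Fin m) ℝ) x i) P = eval (fun i => x i) P) →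
      P ∈ Algebra.adjoin ℝ (Set.range ρp))
    {x y : EuclideanSpace ℝ (Fin m)}
    (h : ∀ j, eval (fun i => x i) (ρp j) = eval (fun i => y i) (ρp j)) : ‖x‖ = ‖y‖ := by
  have hinv : ∀ k ∈ K, ∀ z : EuclideanSpace ℝ (Fin m),
      eval (fun i => mact (k : Matrix (Fin m) (Fin m) ℝ) z i) (∑ i, X i ^ 2) =
        eval (fun i => z i) (∑ i, X i ^ 2) := by
    intro k _ z
    rw [eval_sum_X_sq, eval_sum_X_sq, norm_mact_of_mem_orthogonalGroup k.2]
  have hsq := eval_eq_of_mem_adjoin_range (hρgen _ hinv) h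
  rw [eval_sum_X_sq, eval_sum_X_sq] at hsq
  exact (pow_left_inj₀ (norm_nonneg _) (norm_nonneg _) two_ne_zero).1 hsq

noncomputable def hilbertGauge {m d : ℕ} (ρp : Fin d → MvPolynomial (Fin m) ℝ) (α : Fin d → ℕ)
    (x : EuclideanSpace ℝ (Fin m)) : ℝ :=
  ∑ j, |eval (fun i => x i) (ρp j)| ^ (1 / (α j : ℝ))

section hilbertGauge

variable {m d : ℕ} (ρp : Fin d → MvPolynomial (Fin m) ℝ) (α : Fin d → ℕ)

theorem continuous_hilbertGauge : Continuous (hilbertGauge ρp α) := by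
  refine continuous_finsetSum _ fun j _ => ?_
  refine (Real.continuous_rpow_const (by positivity)).comp (Continuous.abs ?_)
  exact (continuous_eval (ρp j)).comp (PiLp.continuous_ofLp 2 _)

theorem hilbertGauge_nonneg (x : EuclideanSpace ℝ (Fin m)) : 0 ≤ hilbertGauge ρp α x :=
  Finset.sum_nonneg fun _ _ => Real.rpow_nonneg (abs_nonneg _) _

variable {ρp α}

theorem hilbertGauge_eq_zero_iff (hα : ∀ j, α j ≠ 0) (x : EuclideanSpace ℝ (Fin m)) :
    hilbertGauge ρp α x = 0 ↔ ∀ j, eval (fun i => x i) (ρp j) = 0 := by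
  rw [hilbertGauge, Finset.sum_eq_zero_iff_of_nonneg fun _ _ => Real.rpow_nonneg (abs_nonneg _) _]
  refine forall_congr' fun j => ?_
  rw [Real.rpow_eq_zero (abs_nonneg _) (by simpa using hα j), abs_eq_zero]
  exact ⟨fun h => h (Finset.mem_univ j), fun h _ => h⟩

theorem hilbertGauge_smul (hα : ∀ j, α j ≠ 0)
    (hhom : ∀ j, ∀ r : ℝ, 0 < r → ∀ x : EuclideanSpace ℝ (Fin m),
      eval (fun i => (r • x) i) (ρp j) = r ^ (α j) * eval (fun i => x i) (ρp j))
    {r : ℝ} (hr : 0 < r) (x : EuclideanSpace ℝ (Fin m)) :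
    hilbertGauge ρp α (r • x) = r * hilbertGauge ρp α x := by
  rw [hilbertGauge, hilbertGauge, Finset.mul_sum]
  exact Finset.sum_congr rfl fun j _ => abs_rpow_one_div_of_pow_homogeneous
    (g := fun x : EuclideanSpace ℝ (Fin m) => eval (fun i => x i) (ρp j)) (hα j) (hhom j) hr x

end hilbertGauge

theorem stmt7_general (m d : ℕ)
    (K : Subgroup (Matrix.orthogonalGroup (Fin m) ℝ))
    (ρp : Fin d → MvPolynomial (Fin m) ℝ)
    (hρgen : ∀ P : MvPolynomial (Fin m) ℝ,
      (∀ k ∈ K, ∀ x : EuclideanSpace ℝ (Fin m),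
        MvPolynomial.eval (fun i => mact (k : Matrix (Fin m) (Fin m) ℝ) x i) P =
          MvPolynomial.eval (fun i => x i) P) →
      P ∈ Algebra.adjoin ℝ (Set.range ρp))
    (α : Fin d → ℕ) (hα : ∀ j, 1 ≤ α j)
    (hhom : ∀ j, ∀ r : ℝ, 0 < r → ∀ x : EuclideanSpace ℝ (Fin m),
      MvPolynomial.eval (fun i => (r • x) i) (ρp j) =
        r ^ (α j) * MvPolynomial.eval (fun i => x i) (ρp j)) :
    (∀ x : EuclideanSpace ℝ (Fin m), evalMap ρp x = 0 ↔ x = 0) ∧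
    ∃ c C : ℝ, 0 < c ∧ c ≤ C ∧
      ∀ x : EuclideanSpace ℝ (Fin m),
        c * ‖x‖ ≤ ∑ j, |MvPolynomial.eval (fun i => x i) (ρp j)| ^ (1 / (α j : ℝ)) ∧
        ∑ j, |MvPolynomial.eval (fun i => x i) (ρp j)| ^ (1 / (α j : ℝ)) ≤ C * ‖x‖ := by
  have hα0 : ∀ j, α j ≠ 0 := fun j => Nat.one_le_iff_ne_zero.1 (hα j)
  have hρ0 : ∀ j, eval (fun i => (0 : EuclideanSpace ℝ (Fin m)) i) (ρp j) = 0 := fun j =>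
    apply_zero_of_pow_homogeneous
      (g := fun x : EuclideanSpace ℝ (Fin m) => eval (fun i => x i) (ρp j)) (hα0 j) (hhom j)
  have hzero : ∀ x : EuclideanSpace ℝ (Fin m), (∀ j, eval (fun i => x i) (ρp j) = 0) ↔ x = 0 := by
    refine fun x => ⟨fun hx => norm_eq_zero.1 ?_, fun hx j => hx ▸ hρ0 j⟩
    simpa using norm_eq_of_eval_hilbertBasis_eq hρgen (y := 0) fun j => (hx j).trans (hρ0 j).symm
  refine ⟨fun x => (evalMap_eq_zero_iff ρp x).trans (hzero x), ?_⟩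
  refine exists_mul_norm_le_le_mul_norm_of_homogeneous (continuous_hilbertGauge ρp α)
    (fun x hx => ?_) (fun r hr x => hilbertGauge_smul hα0 hhom hr x)
  refine (hilbertGauge_nonneg ρp α x).lt_of_ne' ?_
  rwa [Ne, hilbertGauge_eq_zero_iff hα0, hzero]

/-- If moreover each `ρ_j` is homogeneous of degree `α_j ≥ 1`, then `ρ(x) = 0 ↔ x = 0` and
`Σ_j |ρ_j(x)|^{1/α_j}` is comparable to `|x|`:
`c |x| ≤ Σ_j |ρ_j(x)|^{1/α_j} ≤ C |x|` for constants `0 < c ≤ C`. -/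
theorem stmt7 (m d : ℕ) (hm : 1 ≤ m)
    (K : Subgroup (Matrix.orthogonalGroup (Fin m) ℝ))
    (hK : IsClosed (K : Set (Matrix.orthogonalGroup (Fin m) ℝ)))
    (ρp : Fin d → MvPolynomial (Fin m) ℝ)
    (hρinv : ∀ j, ∀ k ∈ K, ∀ x : EuclideanSpace ℝ (Fin m),
      MvPolynomial.eval (fun i => mact (k : Matrix (Fin m) (Fin m) ℝ) x i) (ρp j) =
        MvPolynomial.eval (fun i => x i) (ρp j))
    (hρgen : ∀ P : MvPolynomial (Fin m) ℝ,
      (∀ k ∈ K, ∀ x : EuclideanSpace ℝ (Fin m),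
        MvPolynomial.eval (fun i => mact (k : Matrix (Fin m) (Fin m) ℝ) x i) P =
          MvPolynomial.eval (fun i => x i) P) →
      P ∈ Algebra.adjoin ℝ (Set.range ρp))
    (α : Fin d → ℕ) (hα : ∀ j, 1 ≤ α j)
    (hhom : ∀ j, ∀ r : ℝ, 0 < r → ∀ x : EuclideanSpace ℝ (Fin m),
      MvPolynomial.eval (fun i => (r • x) i) (ρp j) =
        r ^ (α j) * MvPolynomial.eval (fun i => x i) (ρp j)) :
    (∀ x : EuclideanSpace ℝ (Fin m), evalMap ρp x = 0 ↔ x = 0) ∧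
    ∃ c C : ℝ, 0 < c ∧ c ≤ C ∧
      ∀ x : EuclideanSpace ℝ (Fin m),
        c * ‖x‖ ≤ ∑ j, |MvPolynomial.eval (fun i => x i) (ρp j)| ^ (1 / (α j : ℝ)) ∧
        ∑ j, |MvPolynomial.eval (fun i => x i) (ρp j)| ^ (1 / (α j : ℝ)) ≤ C * ‖x‖ :=
  stmt7_general m d K ρp hρgen α hα hhom
end

section
/- The Hilbert map ρ : ℝᵐ → ℝᵈ is proper (the preimage of every compact subset of ℝᵈ is compact), and its image ρ(ℝᵐ) is a closed subset of ℝᵈ. -/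
open MvPolynomial Matrix

theorem MvPolynomial.eval_aeval {σ τ R : Type*} [CommSemiring R] (g : σ → R)
    (f : τ → MvPolynomial σ R) (Q : MvPolynomial τ R) :
    eval g (aeval f Q) = eval (fun j => eval g (f j)) Q := by
  simpa using DFunLike.congr_fun (comp_aeval f (aeval g)) Q

noncomputable def sumSqPoly (n : Type*) [Fintype n] : MvPolynomial n ℝ :=
  ∑ i, X i ^ 2

section SumSqPoly

variable {n : Type*} [Fintype n]

theorem eval_sumSqPoly (v : n → ℝ) : eval v (sumSqPoly n) = v ⬝ᵥ v := by
  simp [sumSqPoly, dotProduct, sq]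

theorem eval_sumSqPoly_ofLp (x : EuclideanSpace ℝ n) : eval x.ofLp (sumSqPoly n) = ‖x‖ ^ 2 := by
  simp [sumSqPoly, EuclideanSpace.real_norm_sq_eq]

theorem eval_sumSqPoly_mulVec [DecidableEq n] {A : Matrix n n ℝ}
    (hA : A ∈ orthogonalGroup n ℝ) (v : n → ℝ) :
    eval (A *ᵥ v) (sumSqPoly n) = eval v (sumSqPoly n) := by
  have hAA : Aᵀ * A = 1 := by simpa [star_eq_conjTranspose] using hA.1
  rw [eval_sumSqPoly, eval_sumSqPoly, dotProduct_mulVec, vecMul_mulVec, hAA, vecMul_one]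

end SumSqPoly

theorem isProperMap_of_norm_le_comp {E Y : Type*} [NormedAddCommGroup E] [ProperSpace E]
    [TopologicalSpace Y] [T2Space Y] [CompactlyCoherentSpace Y] {f : E → Y} (hf : Continuous f)
    {g : Y → ℝ} (hg : Continuous g) (hfg : ∀ x, ‖x‖ ≤ g (f x)) : IsProperMap f := by
  refine isProperMap_iff_isCompact_preimage.2 ⟨hf, fun C hC => ?_⟩
  obtain ⟨M, hM⟩ := hC.exists_bound_of_continuousOn hg.continuousOn
  refine (isCompact_closedBall (0 : E) M).of_isClosed_subset (hC.isClosed.preimage hf)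
    fun x hx => mem_closedBall_zero_iff.2 ?_
  exact (hfg x).trans ((le_abs_self _).trans (hM _ hx))

section HilbertMap

variable {m d : ℕ} (ρp : Fin d → MvPolynomial (Fin m) ℝ)

theorem continuous_evalMap : Continuous (evalMap ρp) :=
  (PiLp.continuous_toLp 2 _).comp <| continuous_pi fun _ =>
    (continuous_eval _).comp (PiLp.continuous_ofLp 2 _)

theorem exists_eval_evalMap_eq_of_mem_adjoin {P : MvPolynomial (Fin m) ℝ}
    (hP : P ∈ Algebra.adjoin ℝ (Set.range ρp)) :
    ∃ Q : MvPolynomial (Fin d) ℝ, ∀ x, eval (evalMap ρp x).ofLp Q = eval x.ofLp P := by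
  rw [Algebra.adjoin_range_eq_range_aeval] at hP
  obtain ⟨Q, rfl⟩ := hP
  exact ⟨Q, fun x => (eval_aeval _ _ _).symm⟩

end HilbertMap

theorem stmt8_general (m d : ℕ)
    (K : Subgroup (Matrix.orthogonalGroup (Fin m) ℝ))
    (ρp : Fin d → MvPolynomial (Fin m) ℝ)
    (hρgen : ∀ P : MvPolynomial (Fin m) ℝ,
      (∀ k ∈ K, ∀ x : EuclideanSpace ℝ (Fin m),
        MvPolynomial.eval (fun i => mact (k : Matrix (Fin m) (Fin m) ℝ) x i) P =
          MvPolynomial.eval (fun i => x i) P) →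
      P ∈ Algebra.adjoin ℝ (Set.range ρp)) :
    (∀ C : Set (EuclideanSpace ℝ (Fin d)), IsCompact C → IsCompact (evalMap ρp ⁻¹' C)) ∧
    IsClosed (Set.range (evalMap ρp)) := by
  obtain ⟨Q, hQ⟩ := exists_eval_evalMap_eq_of_mem_adjoin ρp
    (hρgen (sumSqPoly (Fin m)) fun k _ x => eval_sumSqPoly_mulVec k.2 x.ofLp)
  have hproper : IsProperMap (evalMap ρp) := by
    refine isProperMap_of_norm_le_comp (continuous_evalMap ρp) (g := fun y => √(eval y.ofLp Q))
      ((continuous_eval Q).comp (PiLp.continuous_ofLp 2 _)).sqrt fun x => ?_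
    rw [hQ, eval_sumSqPoly_ofLp, Real.sqrt_sq (norm_nonneg x)]
  exact ⟨fun _ => hproper.isCompact_preimage, hproper.isClosed_range⟩

/-- The Hilbert map `ρ : ℝᵐ → ℝᵈ` of a closed subgroup `K ≤ O(m)` is proper, and its image
`ρ(ℝᵐ)` is closed in `ℝᵈ`. -/
theorem stmt8 (m d : ℕ) (hm : 1 ≤ m)
    (K : Subgroup (Matrix.orthogonalGroup (Fin m) ℝ))
    (hK : IsClosed (K : Set (Matrix.orthogonalGroup (Fin m) ℝ)))
    (ρp : Fin d → MvPolynomial (Fin m) ℝ)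
    (hρinv : ∀ j, ∀ k ∈ K, ∀ x : EuclideanSpace ℝ (Fin m),
      MvPolynomial.eval (fun i => mact (k : Matrix (Fin m) (Fin m) ℝ) x i) (ρp j) =
        MvPolynomial.eval (fun i => x i) (ρp j))
    (hρgen : ∀ P : MvPolynomial (Fin m) ℝ,
      (∀ k ∈ K, ∀ x : EuclideanSpace ℝ (Fin m),
        MvPolynomial.eval (fun i => mact (k : Matrix (Fin m) (Fin m) ℝ) x i) P =
          MvPolynomial.eval (fun i => x i) P) →
      P ∈ Algebra.adjoin ℝ (Set.range ρp)) :
    (∀ C : Set (EuclideanSpace ℝ (Fin d)), IsCompact C → IsCompact (evalMap ρp ⁻¹' C)) ∧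
    IsClosed (Set.range (evalMap ρp)) :=
  stmt8_general m d K ρp hρgen
end

section
/- Let h ∈ S(ℝᵈ×ℝ) satisfy ∫_ℝ h(z,s) ds = 0 for every z ∈ ℝᵈ. Then the function f₁(z,t) = ∫_{−∞}^{t} h(z,s) ds belongs to S(ℝᵈ×ℝ); moreover, for every p ∈ ℕ there exist q ∈ ℕ and C > 0, independent of h, such that ‖f₁‖_{(p,ℝ^{d+1})} ≤ C ‖h‖_{(q,ℝ^{d+1})} for all such h; in particular the map h ↦ f₁ is linear and continuous on the subspace of Schwartz functions with vanishing integral in the last variable. -/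
open MeasureTheory

/-!
Write `f₁(x) = ∫_{u ≤ 0} h(x + (0, u)) du`. Differentiating under the integral shows that every
derivative of `f₁` is the same primitive of the corresponding derivative of `h`, and the latter
again has vanishing integrals in the last variable (differentiate `∫_ℝ h(x + (0, u)) du = 0`).
So it suffices to bound the primitive `g₁` of any `g` with vanishing integrals. For `t ≤ 0`,
`g₁(z, t) = ∫_{s ≤ t} g(z, s) ds`, and for `t > 0`, `g₁(z, t) = -∫_{s > t} g(z, s) ds`; in both
cases `|s| ≥ |t|` on the domain of integration, whence
`(1 + |x|)^k |g₁(x)| ≤ π sup_y (1 + |y|)^(k+2) |g(y)|`. This gives `q = p + 2` and `C = π`.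
-/

open Set Real
open scoped SchwartzMap

universe u

lemma SchwartzMap.exists_one_add_pow_mul_norm_iteratedFDeriv_le {V W : Type*}
    [NormedAddCommGroup V] [NormedSpace ℝ V] [NormedAddCommGroup W] [NormedSpace ℝ W]
    (f : 𝓢(V, W)) (k n : ℕ) : ∃ M, ∀ y, (1 + ‖y‖) ^ k * ‖iteratedFDeriv ℝ n f y‖ ≤ M :=
  ⟨_, SchwartzMap.one_add_le_sup_seminorm_apply (𝕜 := ℝ) (m := (k, n)) le_rfl le_rfl f⟩

-- One universe for `E` and `F`: the inductions below replace `F` by `E × ℝ →L[ℝ] F`.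
variable {E : Type u} [NormedAddCommGroup E] {F : Type u} [NormedAddCommGroup F]

lemma one_add_sq_le_mul_one_add_norm_add_sq (x : E × ℝ) (u : ℝ) :
    1 + u ^ 2 ≤ (1 + ‖x‖) ^ 2 * (1 + ‖x + (0, u)‖) ^ 2 := by
  have hu : |u| ≤ ‖x + (0, u)‖ + ‖x‖ := by
    calc |u| = ‖((0 : E), u)‖ := by simp [Prod.norm_def]
      _ = ‖(x + (0, u)) - x‖ := by rw [add_sub_cancel_left]
      _ ≤ ‖x + (0, u)‖ + ‖x‖ := norm_sub_le _ _
  nlinarith [sq_abs u, abs_nonneg u, norm_nonneg x, norm_nonneg (x + (0, u)),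
    mul_nonneg (norm_nonneg x) (norm_nonneg (x + (0, u)))]

lemma one_add_pow_mul_one_add_sq_le_of_mul_nonneg (k : ℕ) {x : E × ℝ} {u : ℝ}
    (h : 0 ≤ x.2 * u) : (1 + ‖x‖) ^ k * (1 + u ^ 2) ≤ (1 + ‖x + (0, u)‖) ^ (k + 2) := by
  have hadd : |x.2 + u| = |x.2| + |u| := by
    refine ((pow_left_inj₀ (abs_nonneg _) (by positivity) two_ne_zero).mp ?_)
    rw [sq_abs, add_sq, add_sq, sq_abs, sq_abs, mul_assoc 2 |x.2|, ← abs_mul, abs_of_nonneg h,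
      mul_assoc]
  have hnorm : ‖x + (0, u)‖ = max ‖x.1‖ (|x.2| + |u|) := by
    simp [Prod.norm_def, hadd]
  have hx : ‖x‖ ≤ ‖x + (0, u)‖ := by
    rw [hnorm, Prod.norm_def, Real.norm_eq_abs]
    exact max_le_max le_rfl (le_add_of_nonneg_right (abs_nonneg u))
  have hu : |u| ≤ ‖x + (0, u)‖ := by
    rw [hnorm]
    exact le_max_of_le_right (le_add_of_nonneg_left (abs_nonneg _))
  rw [pow_add]
  gcongr
  nlinarith [sq_abs u, abs_nonneg u]

lemma norm_apply_add_le {f : E × ℝ → F} {M : ℝ} (hM : ∀ y, (1 + ‖y‖) ^ 2 * ‖f y‖ ≤ M)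
    (x : E × ℝ) (u : ℝ) : ‖f (x + (0, u))‖ ≤ M * (1 + ‖x‖) ^ 2 * (1 + u ^ 2)⁻¹ := by
  rw [← div_eq_mul_inv, le_div_iff₀ (by positivity)]
  calc ‖f (x + (0, u))‖ * (1 + u ^ 2)
      ≤ ‖f (x + (0, u))‖ * ((1 + ‖x‖) ^ 2 * (1 + ‖x + (0, u)‖) ^ 2) := by
        gcongr; exact one_add_sq_le_mul_one_add_norm_add_sq x u
    _ = (1 + ‖x + (0, u)‖) ^ 2 * ‖f (x + (0, u))‖ * (1 + ‖x‖) ^ 2 := by ring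
    _ ≤ M * (1 + ‖x‖) ^ 2 := by gcongr; exact hM _

variable [NormedSpace ℝ F]

-- At `x = (z, t)` this is `∫_{t + S} f(z, s) ds`, written with a domain independent of `x`.
noncomputable def fiberIntegral (S : Set ℝ) (f : E × ℝ → F) (x : E × ℝ) : F :=
  ∫ u in S, f (x + (0, u))

lemma one_add_pow_mul_norm_fiberIntegral_le {f : E × ℝ → F} {k : ℕ} {M : ℝ}
    (hM : ∀ y, (1 + ‖y‖) ^ (k + 2) * ‖f y‖ ≤ M) {S : Set ℝ} (hS : MeasurableSet S)
    {x : E × ℝ} (hSx : ∀ u ∈ S, 0 ≤ x.2 * u) :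
    (1 + ‖x‖) ^ k * ‖fiberIntegral S f x‖ ≤ π * M := by
  have hx : 0 < (1 + ‖x‖) ^ k := by positivity
  set c := M / (1 + ‖x‖) ^ k with hc_def
  have hc : 0 ≤ c := div_nonneg ((by positivity : (0 : ℝ) ≤ _).trans (hM 0)) hx.le
  have hpt : ∀ u ∈ S, ‖f (x + (0, u))‖ ≤ c * (1 + u ^ 2)⁻¹ := fun u hu ↦ by
    rw [← div_eq_mul_inv, div_div, le_div_iff₀ (by positivity)]
    calc ‖f (x + (0, u))‖ * ((1 + ‖x‖) ^ k * (1 + u ^ 2))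
        ≤ ‖f (x + (0, u))‖ * (1 + ‖x + (0, u)‖) ^ (k + 2) := by
          gcongr; exact one_add_pow_mul_one_add_sq_le_of_mul_nonneg k (hSx u hu)
      _ ≤ M := by rw [mul_comm]; exact hM _
  have hint : Integrable fun u : ℝ ↦ c * (1 + u ^ 2)⁻¹ := integrable_inv_one_add_sq.const_mul c
  have hI : ‖fiberIntegral S f x‖ ≤ c * π :=
    calc ‖fiberIntegral S f x‖ ≤ ∫ u in S, c * (1 + u ^ 2)⁻¹ :=
          norm_integral_le_of_norm_le hint.integrableOn (ae_restrict_of_forall_mem hS hpt)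
      _ ≤ ∫ u, c * (1 + u ^ 2)⁻¹ :=
          setIntegral_le_integral hint (.of_forall fun u ↦ by positivity)
      _ = c * π := by rw [integral_const_mul, integral_univ_inv_one_add_sq]
  calc (1 + ‖x‖) ^ k * ‖fiberIntegral S f x‖ ≤ (1 + ‖x‖) ^ k * (c * π) := by gcongr
    _ = π * M := by rw [hc_def, ← mul_assoc, mul_div_cancel₀ M hx.ne', mul_comm]

lemma fiberIntegral_univ_eq_zero {f : E × ℝ → F} (hf : ∀ z, ∫ s, f (z, s) = 0) :
    fiberIntegral univ f = 0 := by
  ext ⟨z, t⟩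
  simpa [fiberIntegral] using (integral_add_left_eq_self (fun s ↦ f (z, s)) t).trans (hf z)

lemma fiberIntegral_Iic_zero_apply (f : E × ℝ → F) (z : E) (t : ℝ) :
    fiberIntegral (Iic 0) f (z, t) = ∫ s in Iic t, f (z, s) := by
  have := (measurePreserving_add_left volume t).setIntegral_preimage_emb
    (measurableEmbedding_addLeft t) (fun s ↦ f (z, s)) (Iic t)
  simpa [fiberIntegral] using this

variable [NormedSpace ℝ E]

lemma SchwartzMap.integrable_apply_add (f : 𝓢(E × ℝ, F)) (x : E × ℝ) :
    Integrable fun u : ℝ ↦ f (x + (0, u)) := by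
  obtain ⟨M, hM⟩ := f.exists_one_add_pow_mul_norm_iteratedFDeriv_le 2 0
  simp only [norm_iteratedFDeriv_zero] at hM
  exact (integrable_inv_one_add_sq.const_mul _).mono'
    ((f.continuous.comp (continuous_const.add (continuous_const.prodMk continuous_id)))
      |>.aestronglyMeasurable) (.of_forall (norm_apply_add_le hM x))

lemma hasFDerivAt_fiberIntegral (S : Set ℝ) (f : 𝓢(E × ℝ, F)) (x₀ : E × ℝ) :
    HasFDerivAt (fiberIntegral S f) (fiberIntegral S (SchwartzMap.fderivCLM ℝ _ _ f) x₀) x₀ := by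
  obtain ⟨M, hM⟩ :=
    (SchwartzMap.fderivCLM ℝ _ _ f).exists_one_add_pow_mul_norm_iteratedFDeriv_le 2 0
  simp only [norm_iteratedFDeriv_zero] at hM
  refine hasFDerivAt_integral_of_dominated_of_fderiv_le (Metric.ball_mem_nhds x₀ one_pos)
    (bound := fun u ↦ M * (1 + (‖x₀‖ + 1)) ^ 2 * (1 + u ^ 2)⁻¹)
    (.of_forall fun x ↦ (f.integrable_apply_add x).aestronglyMeasurable.restrict)
    (f.integrable_apply_add x₀).integrableOn
    ((SchwartzMap.fderivCLM ℝ _ _ f).integrable_apply_add x₀).aestronglyMeasurable.restrict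
    (.of_forall fun u x hx ↦ ?_) (integrable_inv_one_add_sq.const_mul _).integrableOn
    (.of_forall fun u x _ ↦ (hasFDerivAt_comp_add_right _).mpr (f.hasFDerivAt _))
  have hM0 : 0 ≤ M := (by positivity : (0 : ℝ) ≤ _).trans (hM 0)
  have hx' : ‖x‖ ≤ ‖x₀‖ + 1 := by
    have := norm_le_norm_add_norm_sub' x x₀
    rw [Metric.mem_ball, dist_eq_norm] at hx
    linarith
  refine (norm_apply_add_le hM x u).trans ?_
  gcongr

lemma fderiv_fiberIntegral (S : Set ℝ) (f : 𝓢(E × ℝ, F)) :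
    fderiv ℝ (fiberIntegral S f) = fiberIntegral S (SchwartzMap.fderivCLM ℝ _ _ f) :=
  funext fun x ↦ (hasFDerivAt_fiberIntegral S f x).fderiv

lemma contDiff_fiberIntegral (S : Set ℝ) (n : ℕ) (f : 𝓢(E × ℝ, F)) :
    ContDiff ℝ n (fiberIntegral S f) := by
  have hdiff {G : Type u} [NormedAddCommGroup G] [NormedSpace ℝ G]
      (g : 𝓢(E × ℝ, G)) : Differentiable ℝ (fiberIntegral S g) :=
    fun x ↦ (hasFDerivAt_fiberIntegral S g x).differentiableAt
  induction n generalizing F with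
  | zero => exact contDiff_zero.mpr (hdiff f).continuous
  | succ n ih =>
    rw [Nat.cast_succ]
    refine contDiff_succ_iff_fderiv.mpr ⟨hdiff f, fun h ↦ absurd h (by simp), ?_⟩
    rw [fderiv_fiberIntegral]
    exact ih _

lemma fiberIntegral_univ_fderivCLM {f : 𝓢(E × ℝ, F)} (hf : fiberIntegral univ f = 0) :
    fiberIntegral univ (SchwartzMap.fderivCLM ℝ _ _ f) = 0 := by
  rw [← fderiv_fiberIntegral, hf, fderiv_zero]

lemma one_add_pow_mul_norm_fiberIntegral_Iic_le {f : 𝓢(E × ℝ, F)} (hf : fiberIntegral univ f = 0)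
    {k : ℕ} {M : ℝ} (hM : ∀ y, (1 + ‖y‖) ^ (k + 2) * ‖f y‖ ≤ M) (x : E × ℝ) :
    (1 + ‖x‖) ^ k * ‖fiberIntegral (Iic 0) f x‖ ≤ π * M := by
  rcases le_or_gt x.2 0 with hx | hx
  · exact one_add_pow_mul_norm_fiberIntegral_le hM measurableSet_Iic
      fun u hu ↦ mul_nonneg_of_nonpos_of_nonpos hx hu
  · have hIoi : fiberIntegral (Iic 0) f x = -fiberIntegral (Ioi 0) f x := by
      have := integral_add_compl (measurableSet_Iic (a := (0 : ℝ))) (f.integrable_apply_add x)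
      rw [compl_Iic] at this
      refine eq_neg_of_add_eq_zero_left (this.trans ?_)
      simpa [fiberIntegral] using congrFun hf x
    rw [hIoi, norm_neg]
    exact one_add_pow_mul_norm_fiberIntegral_le hM measurableSet_Ioi
      fun u hu ↦ mul_nonneg hx.le hu.le

theorem one_add_pow_mul_norm_iteratedFDeriv_fiberIntegral_Iic_le (k n : ℕ) {M : ℝ}
    (f : 𝓢(E × ℝ, F)) (hf : fiberIntegral univ f = 0)
    (hM : ∀ y, (1 + ‖y‖) ^ (k + 2) * ‖iteratedFDeriv ℝ n f y‖ ≤ M) (x : E × ℝ) :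
    (1 + ‖x‖) ^ k * ‖iteratedFDeriv ℝ n (fiberIntegral (Iic 0) f) x‖ ≤ π * M := by
  induction n generalizing F with
  | zero =>
    simp only [norm_iteratedFDeriv_zero] at hM ⊢
    exact one_add_pow_mul_norm_fiberIntegral_Iic_le hf hM x
  | succ n ih =>
    rw [← norm_iteratedFDeriv_fderiv, fderiv_fiberIntegral]
    refine ih _ (fiberIntegral_univ_fderivCLM hf) fun y ↦ ?_
    have hy := hM y
    rw [← norm_iteratedFDeriv_fderiv] at hy
    exact hy

noncomputable def SchwartzMap.fiberPrimitive (f : 𝓢(E × ℝ, F)) (hf : fiberIntegral univ f = 0) :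
    𝓢(E × ℝ, F) where
  toFun := fiberIntegral (Iic 0) f
  smooth' := contDiff_infty.mpr fun n ↦ contDiff_fiberIntegral _ n f
  decay' k n := by
    obtain ⟨M, hM⟩ := f.exists_one_add_pow_mul_norm_iteratedFDeriv_le (k + 2) n
    refine ⟨π * M, fun x ↦ le_trans ?_
      (one_add_pow_mul_norm_iteratedFDeriv_fiberIntegral_Iic_le k n f hf hM x)⟩
    gcongr
    linarith

lemma SchwartzMap.fiberPrimitive_apply (f : 𝓢(E × ℝ, F)) (hf : fiberIntegral univ f = 0)
    (z : E) (t : ℝ) : f.fiberPrimitive hf (z, t) = ∫ s in Iic t, f (z, s) :=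
  fiberIntegral_Iic_zero_apply f z t

lemma SchwartzMap.one_add_pow_mul_norm_iteratedFDeriv_le_snorm' {W : Type*}
    [NormedAddCommGroup W] [NormedSpace ℝ W] (f : 𝓢(W, ℂ)) {q j : ℕ} (hj : j ≤ q) (x : W) :
    (1 + ‖x‖) ^ q * ‖iteratedFDeriv ℝ j f x‖ ≤ snorm' q f := by
  refine le_ciSup (f := fun i : Fin (q + 1) × W ↦
    (1 + ‖i.2‖) ^ q * ‖iteratedFDeriv ℝ (i.1 : ℕ) f i.2‖) ?_ (⟨j, by omega⟩, x)
  exact ⟨_, forall_mem_range.mpr fun i ↦ SchwartzMap.one_add_le_sup_seminorm_apply (𝕜 := ℝ)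
    (m := (q, q)) le_rfl i.1.is_le f i.2⟩

lemma snorm'_le {W : Type*} [NormedAddCommGroup W] [NormedSpace ℝ W] {f : W → ℂ} {p : ℕ} {B : ℝ}
    (h : ∀ j ≤ p, ∀ x, (1 + ‖x‖) ^ p * ‖iteratedFDeriv ℝ j f x‖ ≤ B) : snorm' p f ≤ B :=
  ciSup_le fun i ↦ h i.1 i.1.is_le i.2

/-- If `h ∈ 𝓢(ℝᵈ×ℝ)` has `∫_ℝ h(z,s) ds = 0` for every `z`, then
`f₁(z,t) = ∫_{-∞}^t h(z,s) ds` is again a Schwartz function, and for every `p` there are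
`q` and `C > 0`, independent of `h`, with `‖f₁‖_{(p)} ≤ C ‖h‖_{(q)}`. -/
theorem stmt12 (d : ℕ) (p : ℕ) :
    ∃ (q : ℕ) (C : ℝ), 0 < C ∧
      ∀ h : SchwartzMap (EuclideanSpace ℝ (Fin d) × ℝ) ℂ,
        (∀ z : EuclideanSpace ℝ (Fin d), (∫ s : ℝ, h (z, s)) = 0) →
        ∃ f₁ : SchwartzMap (EuclideanSpace ℝ (Fin d) × ℝ) ℂ,
          (∀ (z : EuclideanSpace ℝ (Fin d)) (t : ℝ),
            f₁ (z, t) = ∫ s in Set.Iic t, h (z, s)) ∧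
          snorm' p ⇑f₁ ≤ C * snorm' q ⇑h := by
  refine ⟨p + 2, π, pi_pos, fun h hh ↦ ?_⟩
  have hfiber : fiberIntegral univ h = 0 := fiberIntegral_univ_eq_zero hh
  refine ⟨h.fiberPrimitive hfiber, h.fiberPrimitive_apply hfiber, snorm'_le fun j hj x ↦ ?_⟩
  exact one_add_pow_mul_norm_iteratedFDeriv_fiberIntegral_Iic_le p j h hfiber
    (fun y ↦ h.one_add_pow_mul_norm_iteratedFDeriv_le_snorm' (by omega) y) x
end
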